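/- arXiv:0903.1041 — 3 statements merged into one kernel-verified Lean document; each statement's English description precedes it below -/
import Mathlib

section
/- If P(z) is a polynomial of degree n ≥ 1 that has no zeros in the open unit disk |z| < 1, then max_{|z|=1} |P'(z)| ≤ (n/2) · max_{|z|=1} |P(z)|. -/
/-!
On `|z| = 1` the logarithmic derivative `z P'(z) / P(z) = ∑ z / (z - a)`, summed over the zeros
`a` of `P`, satisfies `2 Re (z / (z - a)) = 1 + (1 - |a|²) / |z - a|²`. So its real part is at
most `n / 2` when no zero lies in the open disk, which gives `|z P'(z)| ≤ |n P(z) - z P'(z)|`,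
and at least `n / 2` when all zeros do, which gives the reverse inequality.

By the maximum modulus principle for the reversed polynomial, `|P(a)| ≤ M |a|ⁿ` for `|a| ≥ 1`,
where `M = max_{|z|=1} |P(z)|`. Hence for `|c| > M` the polynomial `T = P - c zⁿ` has degree `n`
and all its zeros in the open disk, while `n T - z T' = n P - z P'`. Choosing the argument of `c`
so that `z T'(z) = (|z P'(z)| - n |c|) u` with `|u| = 1`, the two inequalities combine to
`|z P'(z)| ≤ | |z P'(z)| - n |c| |`, that is `2 |P'(z)| ≤ n |c|`; now let `|c| → M`.
-/

open Polynomial Complex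

noncomputable def maxMod (P : Polynomial ℂ) : ℝ :=
  sSup ((fun w => ‖P.eval w‖) '' {w : ℂ | ‖w‖ = 1})

theorem norm_eval_le_maxMod (P : ℂ[X]) {w : ℂ} (hw : ‖w‖ = 1) : ‖P.eval w‖ ≤ maxMod P := by
  refine le_csSup ?_ ⟨w, hw, rfl⟩
  have hsphere : {w : ℂ | ‖w‖ = 1} = Metric.sphere 0 1 := by ext; simp
  rw [hsphere]
  exact ((isCompact_sphere 0 1).image (by fun_prop)).bddAbove

theorem maxMod_nonneg (P : ℂ[X]) : 0 ≤ maxMod P :=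
  (norm_nonneg _).trans (norm_eval_le_maxMod P (w := 1) norm_one)

theorem Polynomial.eval_reflect_inv_mul_pow {K : Type*} [Field K] {f : K[X]} {N : ℕ}
    (hf : f.natDegree ≤ N) {x : K} (hx : x ≠ 0) : (reflect N f).eval x⁻¹ * x ^ N = f.eval x := by
  let _ : Invertible x := invertibleOfNonzero hx
  simpa [invOf_eq_inv] using eval₂_reflect_mul_pow (RingHom.id K) x N f hf

theorem norm_eval_reflect_le_maxMod {P : ℂ[X]} {n : ℕ} (hP : P.natDegree ≤ n) {w : ℂ}
    (hw : ‖w‖ ≤ 1) : ‖(reflect n P).eval w‖ ≤ maxMod P := by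
  refine Complex.norm_le_of_forall_mem_frontier_norm_le
    (Metric.isBounded_ball (x := (0 : ℂ)) (r := 1)) (reflect n P).differentiable.diffContOnCl (fun u hu => ?_)
    (by rwa [closure_ball 0 one_ne_zero, mem_closedBall_zero_iff])
  have hu1 : ‖u‖ = 1 := by simpa [frontier_ball (0 : ℂ) one_ne_zero] using hu
  have hu0 : u ≠ 0 := norm_ne_zero_iff.mp (by simp [hu1])
  have := eval_reflect_inv_mul_pow hP (inv_ne_zero hu0)
  rw [inv_inv] at this
  calc ‖(reflect n P).eval u‖ = ‖P.eval u⁻¹‖ := by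
        rw [← this, norm_mul, norm_pow, norm_inv, hu1]; simp
    _ ≤ maxMod P := norm_eval_le_maxMod P (by simp [hu1])

theorem norm_eval_le_maxMod_mul_pow {P : ℂ[X]} {n : ℕ} (hP : P.natDegree ≤ n) {z : ℂ}
    (hz : 1 ≤ ‖z‖) : ‖P.eval z‖ ≤ maxMod P * ‖z‖ ^ n := by
  have hz0 : z ≠ 0 := norm_pos_iff.mp (zero_lt_one.trans_le hz)
  rw [← eval_reflect_inv_mul_pow hP hz0, norm_mul, norm_pow]
  gcongr
  exact norm_eval_reflect_le_maxMod hP (by simpa using inv_le_one_of_one_le₀ hz)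

theorem norm_leadingCoeff_le_maxMod (P : ℂ[X]) : ‖P.leadingCoeff‖ ≤ maxMod P := by
  have := norm_eval_reflect_le_maxMod (P := P) le_rfl (w := 0) (by simp)
  rwa [← coeff_zero_eq_eval_zero, coeff_reflect, revAt_le (Nat.zero_le _)] at this

theorem Complex.two_mul_re_div_sub {z a : ℂ} (hz : ‖z‖ = 1) (hza : z ≠ a) :
    2 * (z / (z - a)).re = 1 + (1 - ‖a‖ ^ 2) / ‖z - a‖ ^ 2 := by
  have hd : ‖z - a‖ ^ 2 ≠ 0 := by simpa [sub_eq_zero] using hza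
  have hz2 : z.re ^ 2 + z.im ^ 2 = 1 := by
    rw [← one_pow 2, ← hz, Complex.sq_norm, normSq_apply]; ring
  rw [div_re, ← add_div, normSq_eq_norm_sq, one_add_div hd, mul_div_assoc']
  congr 1
  simp only [Complex.sq_norm, normSq_apply, sub_re, sub_im]
  linear_combination hz2

theorem Complex.norm_ofReal_sub_sq (t : ℝ) (w : ℂ) :
    ‖(t : ℂ) - w‖ ^ 2 = ‖w‖ ^ 2 + t * (t - 2 * w.re) := by
  simp only [Complex.sq_norm, Complex.normSq_apply, sub_re, sub_im, ofReal_re, ofReal_im]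
  ring

theorem Multiset.two_mul_re_sum_div_sub {z : ℂ} (hz : ‖z‖ = 1) (m : Multiset ℂ) (hm : z ∉ m) :
    2 * (m.map fun a => z / (z - a)).sum.re =
      card m + (m.map fun a => (1 - ‖a‖ ^ 2) / ‖z - a‖ ^ 2).sum := by
  induction m using Multiset.induction with
  | empty => simp
  | cons b m ih =>
    rw [Multiset.mem_cons, not_or] at hm
    simp only [Multiset.map_cons, Multiset.sum_cons, Multiset.card_cons, add_re, mul_add,
      two_mul_re_div_sub hz hm.1, ih hm.2]
    push_cast
    ring

theorem Polynomial.eval_X_mul_derivative_eq (S : ℂ[X]) {z : ℂ} (hS : S.eval z ≠ 0) :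
    z * S.derivative.eval z = S.eval z * (S.roots.map fun a => z / (z - a)).sum := by
  rw [(IsAlgClosed.splits S).eval_derivative_eq_eval_mul_sum hS, mul_left_comm,
    ← Multiset.sum_map_mul_left]
  simp only [mul_one_div]

theorem Polynomial.norm_natDegree_mul_eval_sub_sq (S : ℂ[X]) {z : ℂ} (hz : ‖z‖ = 1)
    (hS : S.eval z ≠ 0) :
    ‖(S.natDegree : ℂ) * S.eval z - z * S.derivative.eval z‖ ^ 2 =
      ‖z * S.derivative.eval z‖ ^ 2 -
        S.natDegree * ‖S.eval z‖ ^ 2 * (S.roots.map fun a => (1 - ‖a‖ ^ 2) / ‖z - a‖ ^ 2).sum := by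
  have hz_root : z ∉ S.roots := fun h => hS (isRoot_of_mem_roots h)
  have hre := S.roots.two_mul_re_sum_div_sub hz hz_root
  rw [IsAlgClosed.card_roots_eq_natDegree] at hre
  set w := (S.roots.map fun a => z / (z - a)).sum
  rw [eval_X_mul_derivative_eq S hS]
  calc ‖(S.natDegree : ℂ) * S.eval z - S.eval z * w‖ ^ 2
      = ‖S.eval z‖ ^ 2 * ‖((S.natDegree : ℝ) : ℂ) - w‖ ^ 2 := by
        rw [← mul_pow, ← norm_mul, mul_sub, mul_comm]; push_cast; rfl
    _ = _ := by
        rw [norm_ofReal_sub_sq, norm_mul, mul_pow, hre]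
        ring

theorem Polynomial.norm_mul_eval_derivative_le {S : ℂ[X]} (hS : ∀ a : ℂ, ‖a‖ < 1 → S.eval a ≠ 0)
    {z : ℂ} (hz : ‖z‖ = 1) :
    ‖z * S.derivative.eval z‖ ≤ ‖(S.natDegree : ℂ) * S.eval z - z * S.derivative.eval z‖ := by
  by_cases hSz : S.eval z = 0
  · simp [hSz]
  have hσ : (S.roots.map fun a => (1 - ‖a‖ ^ 2) / ‖z - a‖ ^ 2).sum ≤ 0 := by
    refine (Multiset.sum_map_le_sum_map _ (fun _ => 0) fun a ha => ?_).trans_eq (by simp)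
    have ha1 : 1 ≤ ‖a‖ := not_lt.mp fun h => hS a h (isRoot_of_mem_roots ha)
    exact div_nonpos_of_nonpos_of_nonneg (by nlinarith) (sq_nonneg _)
  rw [← sq_le_sq₀ (norm_nonneg _) (norm_nonneg _), norm_natDegree_mul_eval_sub_sq S hz hSz,
    le_sub_self_iff]
  exact mul_nonpos_of_nonneg_of_nonpos (by positivity) hσ

theorem Polynomial.norm_natDegree_mul_eval_sub_le {S : ℂ[X]}
    (hS : ∀ a : ℂ, 1 ≤ ‖a‖ → S.eval a ≠ 0) {z : ℂ} (hz : ‖z‖ = 1) :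
    ‖(S.natDegree : ℂ) * S.eval z - z * S.derivative.eval z‖ ≤ ‖z * S.derivative.eval z‖ := by
  have hσ : 0 ≤ (S.roots.map fun a => (1 - ‖a‖ ^ 2) / ‖z - a‖ ^ 2).sum := by
    refine Multiset.sum_nonneg fun x hx => ?_
    obtain ⟨a, ha, rfl⟩ := Multiset.mem_map.mp hx
    have ha1 : ‖a‖ < 1 := not_le.mp fun h => hS a h (isRoot_of_mem_roots ha)
    exact div_nonneg (by nlinarith [norm_nonneg a]) (sq_nonneg _)
  rw [← sq_le_sq₀ (norm_nonneg _) (norm_nonneg _), norm_natDegree_mul_eval_sub_sq S hz (hS z hz.ge),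
    sub_le_self_iff]
  positivity

theorem natDegree_sub_C_mul_X_pow_of_maxMod_lt {P : ℂ[X]} {c : ℂ} (hc : maxMod P < ‖c‖) :
    (P - C c * X ^ P.natDegree).natDegree = P.natDegree := by
  refine natDegree_eq_of_le_of_coeff_ne_zero
    ((natDegree_sub_le _ _).trans (max_le le_rfl (natDegree_C_mul_X_pow_le _ _))) ?_
  rw [coeff_sub, coeff_C_mul_X_pow, if_pos rfl, sub_ne_zero]
  intro h
  exact (norm_leadingCoeff_le_maxMod P).not_gt (by rwa [leadingCoeff, h])

theorem eval_sub_C_mul_X_pow_ne_zero_of_maxMod_lt {P : ℂ[X]} {n : ℕ} (hP : P.natDegree ≤ n)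
    {c : ℂ} (hc : maxMod P < ‖c‖) {a : ℂ} (ha : 1 ≤ ‖a‖) : (P - C c * X ^ n).eval a ≠ 0 := by
  rw [eval_sub, eval_mul, eval_C, eval_pow, eval_X, sub_ne_zero]
  refine ne_of_apply_ne norm (ne_of_lt ?_)
  calc ‖P.eval a‖ ≤ maxMod P * ‖a‖ ^ n := norm_eval_le_maxMod_mul_pow hP ha
    _ < ‖c‖ * ‖a‖ ^ n := by gcongr
    _ = ‖c * a ^ n‖ := by rw [norm_mul, norm_pow]

theorem natDegree_mul_eval_sub_C_mul_X_pow (P : ℂ[X]) (n : ℕ) (c z : ℂ) :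
    (n : ℂ) * (P - C c * X ^ n).eval z - z * (P - C c * X ^ n).derivative.eval z =
      n * P.eval z - z * P.derivative.eval z := by
  simp only [eval_sub, eval_mul, eval_C, eval_pow, eval_X, derivative_sub, derivative_C_mul_X_pow]
  rcases n with _ | n
  · simp
  · push_cast; ring

theorem norm_mul_eval_derivative_le_abs_sub {P : ℂ[X]} (hP : ∀ a : ℂ, ‖a‖ < 1 → P.eval a ≠ 0)
    {z : ℂ} (hz : ‖z‖ = 1) {ρ : ℝ} (hρ : maxMod P < ρ) :
    ‖z * P.derivative.eval z‖ ≤ |‖z * P.derivative.eval z‖ - P.natDegree * ρ| := by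
  set d := z * P.derivative.eval z
  set n := P.natDegree
  set s := exp (arg d * I)
  have hzn : z ^ n ≠ 0 := pow_ne_zero _ (norm_ne_zero_iff.mp (by simp [hz]))
  set c := ρ * s / z ^ n
  have hc : ‖c‖ = ρ := by
    simp [c, s, norm_exp_ofReal_mul_I, hz, abs_of_pos ((maxMod_nonneg P).trans_lt hρ)]
  set T := P - C c * X ^ n
  have hTdeg : T.natDegree = n := natDegree_sub_C_mul_X_pow_of_maxMod_lt (hc ▸ hρ)
  have hT : ∀ a : ℂ, 1 ≤ ‖a‖ → T.eval a ≠ 0 := fun a =>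
    eval_sub_C_mul_X_pow_ne_zero_of_maxMod_lt le_rfl (hc ▸ hρ)
  have hpolar := natDegree_mul_eval_sub_C_mul_X_pow P n c z
  have hTder : z * T.derivative.eval z = ((‖d‖ - n * ρ : ℝ) : ℂ) * s := by
    have hcz : c * z ^ n = ρ * s := div_mul_cancel₀ _ hzn
    have hd : (‖d‖ : ℂ) * s = d := norm_mul_exp_arg_mul_I d
    simp only [eval_sub, eval_mul, eval_C, eval_pow, eval_X] at hpolar
    push_cast
    linear_combination (-1 : ℂ) * hpolar - n * hcz - hd
  calc ‖d‖ ≤ ‖(n : ℂ) * P.eval z - d‖ := norm_mul_eval_derivative_le hP hz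
    _ = ‖(T.natDegree : ℂ) * T.eval z - z * T.derivative.eval z‖ := by rw [hTdeg, hpolar]
    _ ≤ ‖z * T.derivative.eval z‖ := norm_natDegree_mul_eval_sub_le hT hz
    _ = |‖d‖ - n * ρ| := by rw [hTder, norm_mul, norm_exp_ofReal_mul_I, norm_real, mul_one]; rfl

theorem two_mul_le_of_forall_le_abs_sub {a b c : ℝ} (hc : 0 < c) (hb : 0 ≤ b)
    (h : ∀ ρ > b, a ≤ |a - c * ρ|) : 2 * a ≤ c * b := by
  rw [← div_le_iff₀' hc]
  refine le_of_forall_gt_imp_ge_of_dense fun ρ hρ => ?_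
  have hcρ : 0 < c * ρ := mul_pos hc (hb.trans_lt hρ)
  rw [div_le_iff₀' hc]
  rcases le_abs'.mp (h ρ hρ) with h' | h' <;> linarith

/-- Erdős–Lax theorem: if `P` has degree `n ≥ 1` and no zeros in `|z| < 1`, then
`max_{|z|=1} |P'(z)| ≤ (n/2) · max_{|z|=1} |P(z)|`. -/
theorem erdos_lax (P : Polynomial ℂ) (n : ℕ) (hn : 1 ≤ n)
    (hdeg : P.natDegree = n)
    (hz : ∀ z : ℂ, ‖z‖ < 1 → P.eval z ≠ 0) :
    ∀ z : ℂ, ‖z‖ = 1 →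
      ‖(Polynomial.derivative P).eval z‖ ≤ (n / 2 : ℝ) * maxMod P := by
  intro z hz1
  subst hdeg
  have h := two_mul_le_of_forall_le_abs_sub (by exact_mod_cast hn) (maxMod_nonneg P)
    fun ρ hρ => norm_mul_eval_derivative_le_abs_sub hz hz1 hρ
  rw [norm_mul, hz1, one_mul] at h
  linarith
end

section
/- If P(z) is a polynomial of degree n all of whose zeros lie in |z| < 1, then for all complex α with |α| ≤ 1, all R > 1, and all z with |z| = 1: |P(Rz) − αP(z)| > (((R+1)/2)ⁿ − |α|)·|P(z)|. -/
/-!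
Factor `P(w) = a ∏ (w - rᵢ)` over its roots. For each root `r` with `‖r‖ < ‖z‖`, writing
`c = (R + 1) / 2`, we have `R z - r = c (z - r) + (c - 1) (z + r)` and
`⟪z - r, z + r⟫ = ‖z‖² - ‖r‖² > 0`, so `‖R z - r‖ > c ‖z - r‖`. Multiplying over the `n` roots
gives `‖P(R z)‖ > cⁿ ‖P(z)‖`, and the triangle inequality absorbs the term `α P(z)`.
-/

open Polynomial

theorem norm_sub_lt_norm_smul_sub {E : Type*} [NormedAddCommGroup E] [InnerProductSpace ℝ E]
    {z r : E} (hr : ‖r‖ < ‖z‖) {R : ℝ} (hR : 1 < R) :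
    (R + 1) / 2 * ‖z - r‖ < ‖R • z - r‖ := by
  set c := (R + 1) / 2
  have hdecomp : R • z - r = c • (z - r) + (c - 1) • (z + r) := by
    simp only [c, smul_sub, smul_add, sub_smul, one_smul]; module
  have hinner : inner ℝ (z - r) (z + r) = ‖z‖ ^ 2 - ‖r‖ ^ 2 := by
    rw [inner_sub_left, inner_add_right, inner_add_right, real_inner_comm r z,
      real_inner_self_eq_norm_sq, real_inner_self_eq_norm_sq]; ring
  have hc : 1 < c := by simp only [c]; linarith
  have hcross : 0 < c * ((c - 1) * (‖z‖ ^ 2 - ‖r‖ ^ 2)) := by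
    have : ‖r‖ ^ 2 < ‖z‖ ^ 2 := pow_lt_pow_left₀ hr (norm_nonneg r) two_ne_zero
    have : 0 < c - 1 := sub_pos.2 hc
    positivity
  have hsq : (c * ‖z - r‖) ^ 2 < ‖R • z - r‖ ^ 2 := by
    rw [hdecomp, norm_add_sq_real, norm_smul, norm_smul, real_inner_smul_left,
      real_inner_smul_right, hinner, Real.norm_eq_abs, abs_of_pos (by linarith)]
    nlinarith [sq_nonneg (‖c - 1‖ * ‖z + r‖)]
  exact lt_of_pow_lt_pow_left₀ 2 (norm_nonneg _) hsq

theorem Polynomial.Splits.norm_eval_eq_prod_roots {K : Type*} [NormedField K] {P : K[X]}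
    (hP : P.Splits) (w : K) :
    ‖P.eval w‖ = ‖P.leadingCoeff‖ * (P.roots.map fun r => ‖w - r‖).prod := by
  rw [hP.eval_eq_prod_roots, norm_mul]
  exact congrArg _ (Multiset.prod_hom' _ (normHom : K →*₀ ℝ) _).symm

theorem Polynomial.pow_natDegree_mul_norm_eval_lt_norm_eval_ofReal_mul {P : ℂ[X]}
    (hdeg : 0 < P.natDegree) {z : ℂ} (hroots : ∀ r ∈ P.roots, ‖r‖ < ‖z‖) {R : ℝ} (hR : 1 < R) :
    ((R + 1) / 2) ^ P.natDegree * ‖P.eval z‖ < ‖P.eval ((R : ℂ) * z)‖ := by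
  have hP0 : P ≠ 0 := ne_zero_of_natDegree_gt hdeg
  have hsplits : P.Splits := IsAlgClosed.splits P
  have hcard : P.natDegree = Multiset.card P.roots := hsplits.natDegree_eq_card_roots
  have hne : P.roots ≠ 0 := by
    rw [← Multiset.card_pos]; omega
  have hfactor : ∀ r ∈ P.roots, (R + 1) / 2 * ‖z - r‖ < ‖(R : ℂ) * z - r‖ := fun r hr => by
    simpa only [Complex.real_smul] using norm_sub_lt_norm_smul_sub (hroots r hr) hR
  have hpos : ∀ r ∈ P.roots, 0 < (R + 1) / 2 * ‖z - r‖ := fun r hr => by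
    have : 0 < ‖z - r‖ := norm_pos_iff.2 <| sub_ne_zero.2 <| by
      rintro rfl; exact lt_irrefl _ (hroots _ hr)
    have : 0 < (R + 1) / 2 := by linarith
    positivity
  rw [hsplits.norm_eval_eq_prod_roots, hsplits.norm_eval_eq_prod_roots, hcard, mul_left_comm,
    ← Multiset.prod_replicate, ← Multiset.map_const', ← Multiset.prod_map_mul]
  exact mul_lt_mul_of_pos_left (Multiset.prod_map_lt_prod_map hne _ _ hpos hfactor)
    (norm_pos_iff.2 (leadingCoeff_ne_zero.2 hP0))

theorem shifted_lower_bound_general (P : Polynomial ℂ) (n : ℕ) (hn : 1 ≤ n)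
    (hdeg : P.natDegree = n)
    (hz : ∀ w : ℂ, P.eval w = 0 → ‖w‖ < 1)
    (α : ℂ) (R : ℝ) (hR : 1 < R) :
    ∀ z : ℂ, ‖z‖ = 1 →
      (((R + 1) / 2) ^ n - ‖α‖) * ‖P.eval z‖
        < ‖P.eval ((R : ℂ) * z) - α * P.eval z‖ := by
  intro z hz1
  have hroots : ∀ r ∈ P.roots, ‖r‖ < ‖z‖ := fun r hr => hz1 ▸ hz r (mem_roots'.1 hr).2
  have hgrowth := pow_natDegree_mul_norm_eval_lt_norm_eval_ofReal_mul (by omega) hroots hR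
  rw [hdeg] at hgrowth
  calc (((R + 1) / 2) ^ n - ‖α‖) * ‖P.eval z‖
      = ((R + 1) / 2) ^ n * ‖P.eval z‖ - ‖α * P.eval z‖ := by rw [norm_mul]; ring
    _ < ‖P.eval ((R : ℂ) * z)‖ - ‖α * P.eval z‖ := by linarith
    _ ≤ ‖P.eval ((R : ℂ) * z) - α * P.eval z‖ := norm_sub_norm_le _ _

/-- If all zeros of `P` (degree `n ≥ 1`) lie in `|z| < 1`, then for `|α| ≤ 1`,
`R > 1` and `|z| = 1`, `|P(Rz) - α P(z)| > (((R+1)/2)^n - |α|) |P(z)|`. -/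
theorem shifted_lower_bound (P : Polynomial ℂ) (n : ℕ) (hn : 1 ≤ n)
    (hdeg : P.natDegree = n)
    (hz : ∀ w : ℂ, P.eval w = 0 → ‖w‖ < 1)
    (α : ℂ) (hα : ‖α‖ ≤ 1) (R : ℝ) (hR : 1 < R) :
    ∀ z : ℂ, ‖z‖ = 1 →
      (((R + 1) / 2) ^ n - ‖α‖) * ‖P.eval z‖
        < ‖P.eval ((R : ℂ) * z) - α * P.eval z‖ :=
  shifted_lower_bound_general P n hn hdeg hz α R hR
end

section
/- If P is a polynomial of degree n all of whose zeros lie in the open unit disk, and α, β are complex numbers with |α| ≤ 1 and |β| ≤ 1, and R > 1, then the polynomial S(z) = P(Rz) − αP(z) + β(((R+1)/2)ⁿ − |α|)P(z) has all its zeros in the open unit disk |z| < 1. -/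
/-!
Suppose `S(z) = 0` with `|z| ≥ 1`. Factoring `P` over its roots `a`, each of which satisfies
`|a| < |z|`, gives `|Rz - a| > (R+1)/2 · |z - a|`, hence `|P(Rz)| > ((R+1)/2)ⁿ |P(z)|`.
On the other hand `S(z) = 0` says `P(Rz) = (α - β (((R+1)/2)ⁿ - |α|)) P(z)`, and the
coefficient has modulus at most `((R+1)/2)ⁿ`, a contradiction.
-/

open Polynomial

/-- Writing `R • z - a = (R+1)/2 • (z - a) + (R-1)/2 • (z + a)`, the cross term is
`⟪z - a, z + a⟫ = ‖z‖² - ‖a‖² > 0`. -/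
theorem half_add_one_mul_norm_sub_lt_norm_smul_sub {E : Type*} [NormedAddCommGroup E]
    [InnerProductSpace ℝ E] {R : ℝ} (hR : 1 < R) {z a : E} (haz : ‖a‖ < ‖z‖) :
    (R + 1) / 2 * ‖z - a‖ < ‖R • z - a‖ := by
  have hdecomp : ‖R • z - a‖ ^ 2 = ((R + 1) / 2) ^ 2 * ‖z - a‖ ^ 2
      + ((R - 1) / 2) ^ 2 * ‖z + a‖ ^ 2 + (R ^ 2 - 1) / 2 * (‖z‖ ^ 2 - ‖a‖ ^ 2) := by
    simp only [← real_inner_self_eq_norm_sq, inner_sub_left, inner_sub_right, inner_add_left,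
      inner_add_right, real_inner_smul_left, real_inner_smul_right, real_inner_comm a z]
    ring
  have hcross : 0 < (R ^ 2 - 1) / 2 * (‖z‖ ^ 2 - ‖a‖ ^ 2) := by
    have : ‖a‖ ^ 2 < ‖z‖ ^ 2 := pow_lt_pow_left₀ haz (norm_nonneg a) two_ne_zero
    have : 1 < R ^ 2 := one_lt_pow₀ hR two_ne_zero
    positivity
  apply lt_of_pow_lt_pow_left₀ 2 (norm_nonneg _)
  nlinarith [sq_nonneg ((R - 1) / 2), sq_nonneg ‖z + a‖]

theorem Polynomial.Splits.norm_eval_eq {K : Type*} [NormedField K] {P : K[X]} (hP : P.Splits)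
    (x : K) : ‖P.eval x‖ = ‖P.leadingCoeff‖ * (P.roots.map fun a ↦ ‖x - a‖).prod := by
  rw [hP.eval_eq_prod_roots, norm_mul, ← normHom_apply (_ : Multiset K).prod, map_multiset_prod,
    Multiset.map_map]
  rfl

theorem half_add_one_pow_mul_norm_eval_lt {P : ℂ[X]} (hdeg : 0 < P.natDegree) {R : ℝ}
    (hR : 1 < R) {z : ℂ} (hroots : ∀ a ∈ P.roots, ‖a‖ < ‖z‖) :
    ((R + 1) / 2) ^ P.natDegree * ‖P.eval z‖ < ‖P.eval (R * z)‖ := by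
  have hsplits : P.Splits := IsAlgClosed.splits P
  have hP : P ≠ 0 := ne_zero_of_natDegree_gt hdeg
  have hne : P.roots ≠ 0 := by
    rw [← Multiset.card_pos, IsAlgClosed.card_roots_eq_natDegree]
    exact hdeg
  have hfactor : (P.roots.map fun a ↦ (R + 1) / 2 * ‖z - a‖).prod
      < (P.roots.map fun a ↦ ‖(R : ℂ) * z - a‖).prod := by
    refine Multiset.prod_map_lt_prod_map hne _ _ (fun a ha ↦ ?_) (fun a ha ↦ ?_)
    · have : z - a ≠ 0 := sub_ne_zero.2 fun h ↦ (h ▸ hroots a ha).false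
      have : 0 < R + 1 := by linarith
      positivity
    · rw [← Complex.real_smul]
      exact half_add_one_mul_norm_sub_lt_norm_smul_sub hR (hroots a ha)
  rw [Multiset.prod_map_mul, Multiset.map_const', Multiset.prod_replicate,
    IsAlgClosed.card_roots_eq_natDegree] at hfactor
  rw [hsplits.norm_eval_eq, hsplits.norm_eval_eq, mul_left_comm]
  exact mul_lt_mul_of_pos_left hfactor (norm_pos_iff.2 (leadingCoeff_ne_zero.2 hP))

theorem norm_sub_mul_sub_norm_le {𝕜 : Type*} [RCLike 𝕜] {α β : 𝕜} {c : ℝ} (hα : ‖α‖ ≤ c)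
    (hβ : ‖β‖ ≤ 1) : ‖α - β * ((c : 𝕜) - (‖α‖ : 𝕜))‖ ≤ c := by
  have hgap : ‖(c : 𝕜) - (‖α‖ : 𝕜)‖ = c - ‖α‖ := by
    rw [← RCLike.ofReal_sub, RCLike.norm_ofReal, abs_of_nonneg (sub_nonneg.2 hα)]
  calc ‖α - β * ((c : 𝕜) - (‖α‖ : 𝕜))‖
      ≤ ‖α‖ + ‖β‖ * (c - ‖α‖) := by
        rw [← hgap, ← norm_mul]
        exact norm_sub_le _ _
    _ ≤ ‖α‖ + 1 * (c - ‖α‖) := by gcongr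
    _ = c := by ring

/-- If all zeros of `P` (degree `n ≥ 1`) lie in `|z| < 1`, `|α| ≤ 1`, `|β| ≤ 1`
and `R > 1`, then all zeros of
`S(z) = P(Rz) - α P(z) + β (((R+1)/2)^n - |α|) P(z)` lie in `|z| < 1`. -/
theorem S_zeros_in_disk (P : Polynomial ℂ) (n : ℕ) (hn : 1 ≤ n)
    (hdeg : P.natDegree = n)
    (hz : ∀ w : ℂ, P.eval w = 0 → ‖w‖ < 1)
    (α β : ℂ) (hα : ‖α‖ ≤ 1) (hβ : ‖β‖ ≤ 1)
    (R : ℝ) (hR : 1 < R) :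
    ∀ z : ℂ,
      P.eval ((R : ℂ) * z) - α * P.eval z
          + β * ((((R : ℂ) + 1) / 2) ^ n - (‖α‖ : ℂ)) * P.eval z = 0 →
        ‖z‖ < 1 := by
  intro z hS
  by_contra! hz1
  have hroots : ∀ a ∈ P.roots, ‖a‖ < ‖z‖ := fun a ha ↦
    (hz a (isRoot_of_mem_roots ha)).trans_le hz1
  have hgrowth := half_add_one_pow_mul_norm_eval_lt (hdeg ▸ hn) hR hroots
  rw [hdeg] at hgrowth
  set c : ℝ := ((R + 1) / 2) ^ n with hc
  have hαc : ‖α‖ ≤ c := hα.trans (one_le_pow₀ (by linarith))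
  have hPRz : P.eval (R * z) = (α - β * ((c : ℂ) - (‖α‖ : ℂ))) * P.eval z := by
    rw [hc]; push_cast; linear_combination hS
  rw [hPRz, norm_mul] at hgrowth
  exact hgrowth.not_ge
    (mul_le_mul_of_nonneg_right (norm_sub_mul_sub_norm_le hαc hβ) (norm_nonneg _))
end
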